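/- arXiv:2105.02784 — 2 statements merged into one kernel-verified Lean document; each statement's English description precedes it below -/
import Mathlib

section
/- If the arbitrage index of a cycle of length n+1 satisfies I > 1/(r₁^{n+1}·r₂^{n+1}), then there exists an input δ > 0 with U(δ) > 0; that is, a profitable cyclic transaction exists along the cycle. -/
/-- Constant-product AMM swap: output of swapping input `δ` through a pool with
input-side reserve `a`, output-side reserve `b` and fee parameters `r1, r2`. -/
noncomputable def swap (r1 r2 a b δ : ℝ) : ℝ := r1 * r2 * b * δ / (a + r1 * δ)

/-- Output of feeding an input through a sequence of pools; each pool is a pair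
`(input-side reserve, output-side reserve)` along the direction of trade. -/
noncomputable def cyclicOut (r1 r2 : ℝ) : List (ℝ × ℝ) → ℝ → ℝ
  | [], δ => δ
  | p :: ps, δ => cyclicOut r1 r2 ps (swap r1 r2 p.1 p.2 δ)

/-- Arbitrage index of a cycle of pools: product of output-side reserves divided
by product of input-side reserves. -/
noncomputable def arbIndex (ps : List (ℝ × ℝ)) : ℝ :=
  (ps.map Prod.snd).prod / (ps.map Prod.fst).prod

/-- The reversed cycle: the same pools in opposite order with the roles of the
two reserves of each pool interchanged. -/
def revPools (ps : List (ℝ × ℝ)) : List (ℝ × ℝ) := (ps.map Prod.swap).reverse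

/-- The updated pools after executing a cyclic transaction with input `δ`:
each pool's input-side reserve increases by the amount swapped in and its
output-side reserve decreases by the amount swapped out. -/
noncomputable def execPools (r1 r2 : ℝ) : List (ℝ × ℝ) → ℝ → List (ℝ × ℝ)
  | [], _ => []
  | p :: ps, δ =>
      (p.1 + δ, p.2 - swap r1 r2 p.1 p.2 δ) :: execPools r1 r2 ps (swap r1 r2 p.1 p.2 δ)

/-!
The cyclic output vanishes at `0` and, by the chain rule, its derivative there is the product of
the marginal rates `r₁ r₂ b / a` of the pools, i.e. `(r₁ r₂)^(n+1) · I`. The hypothesis says exactly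
that this derivative exceeds `1`, so `out δ > δ` for all small enough `δ > 0`.
-/

lemma exists_pos_mul_lt_sub_of_hasDerivAt {f : ℝ → ℝ} {f' c x : ℝ} (hf : HasDerivAt f f' x)
    (hc : c < f') : ∃ δ, 0 < δ ∧ c * δ < f (x + δ) - f x := by
  obtain ⟨δ, hslope, hδ⟩ :=
    ((hf.tendsto_slope_zero_right.eventually_const_lt hc).and self_mem_nhdsWithin).exists
  refine ⟨δ, hδ, ?_⟩
  rwa [smul_eq_mul, lt_inv_mul_iff₀ (Set.mem_Ioi.mp hδ), mul_comm] at hslope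

@[simp]
lemma swap_zero (r1 r2 a b : ℝ) : swap r1 r2 a b 0 = 0 := by
  simp [swap]

lemma hasDerivAt_swap_zero (r1 r2 : ℝ) {a : ℝ} (b : ℝ) (ha : a ≠ 0) :
    HasDerivAt (swap r1 r2 a b) (r1 * r2 * b / a) 0 := by
  have hnum : HasDerivAt (fun δ : ℝ => r1 * r2 * b * δ) (r1 * r2 * b) 0 := by
    simpa using (hasDerivAt_id (0 : ℝ)).const_mul (r1 * r2 * b)
  have hden : HasDerivAt (fun δ : ℝ => a + r1 * δ) r1 0 := by
    simpa using ((hasDerivAt_id (0 : ℝ)).const_mul r1).const_add a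
  refine (hnum.div hden (by simpa using ha)).congr_deriv ?_
  simp only [mul_zero, zero_mul, add_zero, sub_zero]
  field_simp

@[simp]
lemma cyclicOut_zero (r1 r2 : ℝ) (ps : List (ℝ × ℝ)) : cyclicOut r1 r2 ps 0 = 0 := by
  induction ps with
  | nil => rfl
  | cons p ps ih => simp [cyclicOut, ih]

lemma arbIndex_cons (p : ℝ × ℝ) (ps : List (ℝ × ℝ)) :
    arbIndex (p :: ps) = p.2 / p.1 * arbIndex ps := by
  simp only [arbIndex, List.map_cons, List.prod_cons, div_mul_div_comm]

lemma hasDerivAt_cyclicOut_zero (r1 r2 : ℝ) {ps : List (ℝ × ℝ)} (hps : ∀ p ∈ ps, p.1 ≠ 0) :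
    HasDerivAt (cyclicOut r1 r2 ps) ((r1 * r2) ^ ps.length * arbIndex ps) 0 := by
  induction ps with
  | nil => simpa [cyclicOut, arbIndex] using hasDerivAt_id' (0 : ℝ)
  | cons p ps ih =>
    have hrest := ih fun q hq => hps q (List.mem_cons_of_mem p hq)
    rw [← swap_zero r1 r2 p.1 p.2] at hrest
    refine (hrest.comp 0 (hasDerivAt_swap_zero r1 r2 p.2 (hps p List.mem_cons_self))).congr_deriv ?_
    rw [arbIndex_cons, List.length_cons]
    ring

theorem profitable_cycle_exists_general
    (n : ℕ) (ps : List (ℝ × ℝ)) (hlen : ps.length = n + 1)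
    (hpos : ∀ p ∈ ps, 0 < p.1 ∧ 0 < p.2)
    (r1 r2 : ℝ) (hr1 : 0 < r1) (hr2 : 0 < r2)
    (hI : arbIndex ps > 1 / (r1 ^ (n + 1) * r2 ^ (n + 1))) :
    ∃ δ : ℝ, 0 < δ ∧ cyclicOut r1 r2 ps δ - δ > 0 := by
  have hderiv := hasDerivAt_cyclicOut_zero r1 r2 fun p hp => (hpos p hp).1.ne'
  have hslope : 1 < (r1 * r2) ^ ps.length * arbIndex ps := by
    rw [hlen, mul_pow]
    exact (div_lt_iff₀' (by positivity)).mp hI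
  obtain ⟨δ, hδ, hgain⟩ := exists_pos_mul_lt_sub_of_hasDerivAt hderiv hslope
  refine ⟨δ, hδ, ?_⟩
  simp only [zero_add, one_mul, cyclicOut_zero, sub_zero] at hgain
  linarith

/-- if the arbitrage index of a cycle of length n+1 exceeds
1/(r1^(n+1) * r2^(n+1)), then some input yields strictly positive utility. -/
theorem profitable_cycle_exists
    (n : ℕ) (ps : List (ℝ × ℝ)) (hlen : ps.length = n + 1)
    (hpos : ∀ p ∈ ps, 0 < p.1 ∧ 0 < p.2)
    (r1 r2 : ℝ) (hr1 : 0 < r1) (hr1' : r1 ≤ 1) (hr2 : 0 < r2) (hr2' : r2 ≤ 1)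
    (hI : arbIndex ps > 1 / (r1 ^ (n + 1) * r2 ^ (n + 1))) :
    ∃ δ : ℝ, 0 < δ ∧ cyclicOut r1 r2 ps δ - δ > 0 :=
  profitable_cycle_exists_general n ps hlen hpos r1 r2 hr1 hr2 hI
end

section
/- At most one orientation of a cycle is profitable: for a cycle of length n+1 with positive reserves and fee parameters r₁, r₂ ∈ (0,1], it is impossible that both the forward cycle and the reversed cycle admit profitable cyclic transactions, i.e., it cannot hold simultaneously that U(δ) > 0 for some δ > 0 and U_rev(δ') > 0 for some δ' > 0. -/
/-- The marginal exchange rate `∂ swap / ∂δ` at `δ = 0` of a pool `(a, b)`. -/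
noncomputable def spotRate (r1 r2 : ℝ) (p : ℝ × ℝ) : ℝ := r1 * r2 * p.2 / p.1

lemma swap_nonneg {r1 r2 a b δ : ℝ} (hr1 : 0 ≤ r1) (hr2 : 0 ≤ r2) (ha : 0 < a) (hb : 0 ≤ b)
    (hδ : 0 ≤ δ) : 0 ≤ swap r1 r2 a b δ := by
  unfold swap; positivity

lemma swap_le_spotRate_mul {r1 r2 a b δ : ℝ} (hr1 : 0 ≤ r1) (hr2 : 0 ≤ r2) (ha : 0 < a)
    (hb : 0 ≤ b) (hδ : 0 ≤ δ) : swap r1 r2 a b δ ≤ spotRate r1 r2 (a, b) * δ := by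
  rw [swap, spotRate, div_mul_eq_mul_div]
  exact div_le_div_of_nonneg_left (by positivity) ha (le_add_of_nonneg_right (by positivity))

lemma spotRate_nonneg {r1 r2 : ℝ} {p : ℝ × ℝ} (hr1 : 0 ≤ r1) (hr2 : 0 ≤ r2) (hp1 : 0 ≤ p.1)
    (hp2 : 0 ≤ p.2) : 0 ≤ spotRate r1 r2 p := by
  unfold spotRate; positivity

lemma spotRate_swap_mul_spotRate {r1 r2 : ℝ} {p : ℝ × ℝ} (hp1 : p.1 ≠ 0) (hp2 : p.2 ≠ 0) :
    spotRate r1 r2 p.swap * spotRate r1 r2 p = (r1 * r2) ^ 2 := by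
  simp only [spotRate, Prod.fst_swap, Prod.snd_swap]
  field_simp

lemma cyclicOut_le_prod_spotRate_mul {r1 r2 : ℝ} (hr1 : 0 ≤ r1) (hr2 : 0 ≤ r2) :
    ∀ {ps : List (ℝ × ℝ)}, (∀ p ∈ ps, 0 < p.1 ∧ 0 ≤ p.2) → ∀ {δ : ℝ}, 0 ≤ δ →
      cyclicOut r1 r2 ps δ ≤ (ps.map (spotRate r1 r2)).prod * δ
  | [], _, δ, _ => by simp [cyclicOut]
  | p :: ps, hpos, δ, hδ => by
    obtain ⟨ha, hb⟩ := hpos p List.mem_cons_self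
    have htail : ∀ q ∈ ps, 0 < q.1 ∧ 0 ≤ q.2 := fun q hq => hpos q (List.mem_cons_of_mem _ hq)
    have hrates : 0 ≤ (ps.map (spotRate r1 r2)).prod := by
      refine List.prod_nonneg fun x hx => ?_
      obtain ⟨q, hq, rfl⟩ := List.mem_map.mp hx
      exact spotRate_nonneg hr1 hr2 (htail q hq).1.le (htail q hq).2
    calc cyclicOut r1 r2 (p :: ps) δ = cyclicOut r1 r2 ps (swap r1 r2 p.1 p.2 δ) := rfl
      _ ≤ (ps.map (spotRate r1 r2)).prod * swap r1 r2 p.1 p.2 δ :=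
        cyclicOut_le_prod_spotRate_mul hr1 hr2 htail (swap_nonneg hr1 hr2 ha hb hδ)
      _ ≤ (ps.map (spotRate r1 r2)).prod * (spotRate r1 r2 p * δ) :=
        mul_le_mul_of_nonneg_left (swap_le_spotRate_mul hr1 hr2 ha hb hδ) hrates
      _ = ((p :: ps).map (spotRate r1 r2)).prod * δ := by
        rw [List.map_cons, List.prod_cons]; ring

lemma one_lt_prod_spotRate_of_profitable {r1 r2 : ℝ} (hr1 : 0 ≤ r1) (hr2 : 0 ≤ r2)
    {ps : List (ℝ × ℝ)} (hpos : ∀ p ∈ ps, 0 < p.1 ∧ 0 ≤ p.2) {δ : ℝ} (hδ : 0 < δ)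
    (hprofit : cyclicOut r1 r2 ps δ - δ > 0) : 1 < (ps.map (spotRate r1 r2)).prod := by
  have := cyclicOut_le_prod_spotRate_mul hr1 hr2 hpos hδ.le
  exact (lt_mul_iff_one_lt_left hδ).mp (by linarith)

lemma mem_revPools {ps : List (ℝ × ℝ)} {p : ℝ × ℝ} : p ∈ revPools ps ↔ p.swap ∈ ps := by
  rw [revPools, List.mem_reverse, ← Prod.swap_swap p, List.mem_map_of_injective Prod.swap_injective,
    Prod.swap_swap]

lemma prod_spotRate_mul_prod_spotRate_revPools (r1 r2 : ℝ) {ps : List (ℝ × ℝ)}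
    (hpos : ∀ p ∈ ps, p.1 ≠ 0 ∧ p.2 ≠ 0) :
    (ps.map (spotRate r1 r2)).prod * ((revPools ps).map (spotRate r1 r2)).prod =
      ((r1 * r2) ^ 2) ^ ps.length := by
  rw [revPools, List.map_reverse, List.prod_reverse, List.map_map, mul_comm,
    ← List.prod_map_mul, List.map_congr_left (l := ps) (g := fun _ => (r1 * r2) ^ 2),
    List.map_const', List.prod_replicate]
  exact fun p hp => spotRate_swap_mul_spotRate (hpos p hp).1 (hpos p hp).2

theorem at_most_one_profitable_direction_general
    (ps : List (ℝ × ℝ))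
    (hpos : ∀ p ∈ ps, 0 < p.1 ∧ 0 < p.2)
    (r1 r2 : ℝ) (hr1 : 0 < r1) (hr1' : r1 ≤ 1) (hr2 : 0 < r2) (hr2' : r2 ≤ 1) :
    ¬ ((∃ δ : ℝ, 0 < δ ∧ cyclicOut r1 r2 ps δ - δ > 0) ∧
       (∃ δ' : ℝ, 0 < δ' ∧ cyclicOut r1 r2 (revPools ps) δ' - δ' > 0)) := by
  rintro ⟨⟨δ, hδ, hprofit⟩, ⟨δ', hδ', hprofit'⟩⟩
  have hfwd := one_lt_prod_spotRate_of_profitable hr1.le hr2.le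
    (fun p hp => ⟨(hpos p hp).1, (hpos p hp).2.le⟩) hδ hprofit
  have hrev := one_lt_prod_spotRate_of_profitable hr1.le hr2.le
    (fun p hp => ⟨(hpos _ (mem_revPools.mp hp)).2, (hpos _ (mem_revPools.mp hp)).1.le⟩) hδ' hprofit'
  have hfee : ((r1 * r2) ^ 2) ^ ps.length ≤ 1 :=
    pow_le_one₀ (by positivity) (pow_le_one₀ (by positivity) (mul_le_one₀ hr1' hr2.le hr2'))
  have hprod := prod_spotRate_mul_prod_spotRate_revPools r1 r2
    (fun p hp => ⟨(hpos p hp).1.ne', (hpos p hp).2.ne'⟩)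
  exact (one_lt_mul_of_lt_of_le hfwd hrev.le).not_ge (hprod ▸ hfee)

/-- at most one orientation of a cycle is profitable: the forward
cycle and the reversed cycle cannot both admit profitable cyclic transactions. -/
theorem at_most_one_profitable_direction
    (n : ℕ) (ps : List (ℝ × ℝ)) (hlen : ps.length = n + 1)
    (hpos : ∀ p ∈ ps, 0 < p.1 ∧ 0 < p.2)
    (r1 r2 : ℝ) (hr1 : 0 < r1) (hr1' : r1 ≤ 1) (hr2 : 0 < r2) (hr2' : r2 ≤ 1) :
    ¬ ((∃ δ : ℝ, 0 < δ ∧ cyclicOut r1 r2 ps δ - δ > 0) ∧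
       (∃ δ' : ℝ, 0 < δ' ∧ cyclicOut r1 r2 (revPools ps) δ' - δ' > 0)) :=
  at_most_one_profitable_direction_general ps hpos r1 r2 hr1 hr1' hr2 hr2'
end
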